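/- arXiv:1907.02471 — 2 statements merged into one kernel-verified Lean document; each statement's English description precedes it below -/
import Mathlib

section
/- Let S : ℝ²ⁿ → ℝ²ⁿ be a linear bijection preserving the standard symplectic form σ((x,p),(x′,p′)) = p·x′ − p′·x, and let U : L²(ℝⁿ) → L²(ℝⁿ) be a unitary operator satisfying U ∘ T(z) ∘ U⁻¹ = T(Sz) for all z ∈ ℝ²ⁿ. Then for every a ∈ L¹(ℝ²ⁿ) and all φ, ψ, χ ∈ L²(ℝⁿ): ∫_{ℝ²ⁿ} a(S⁻¹z) · (ψ|T(z)φ) · (T(z)φ|χ) dz = ∫_{ℝ²ⁿ} a(z) · (U⁻¹ψ | T(z)(U⁻¹φ)) · (T(z)(U⁻¹φ) | U⁻¹χ) dz. (This is the symplectic covariance Op_φ(a ∘ S⁻¹) = U Op_{U⁻¹φ}(a) U⁻¹ of Toeplitz operators, in weak form.) -/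
/-
A linear map preserving a nondegenerate bilinear form `B` satisfies `fᵀ B f = B` on Gram
matrices, hence `det f ^ 2 = 1`; so a linear symplectic map preserves Lebesgue measure on
phase space. By unitarity of `U` and `U T(z) U⁻¹ = T(Sz)`, the right-hand integrand at `z` is
`a z (ψ|T(Sz)φ)(T(Sz)φ|χ)`, and the substitution `z ↦ Sz` turns it into the left-hand side.
-/

open MeasureTheory Complex Real Filter

noncomputable section

/-- Phase space ℝ²ⁿ = ℝⁿ_x × ℝⁿ_p. -/
abbrev Phase (n : ℕ) := (Fin n → ℝ) × (Fin n → ℝ)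

/-- Euclidean dot product on ℝⁿ. -/
def dotR {n : ℕ} (p y : Fin n → ℝ) : ℝ := ∑ i, p i * y i

/-- The cross-Wigner transform
`W(ψ,φ)(x,p) = (2πℏ)^{-n} ∫ e^{-i p·y/ℏ} ψ(x + y/2) conj(φ(x − y/2)) dy`. -/
def crossWigner (ℏ : ℝ) {n : ℕ} (ψ φ : (Fin n → ℝ) → ℂ) (z : Phase n) : ℂ :=
  (((2 * π * ℏ) ^ n : ℝ)⁻¹ : ℂ) *
    ∫ y : Fin n → ℝ,
      Complex.exp (-Complex.I * ((dotR z.2 y : ℝ) : ℂ) / (ℏ : ℂ)) *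
        ψ (z.1 + (2 : ℝ)⁻¹ • y) * (starRingEnd ℂ) (φ (z.1 - (2 : ℝ)⁻¹ • y))

/-- The L² inner product `(ψ|φ) = ∫ ψ(x) conj(φ(x)) dx`, linear in the first argument. -/
def L2inner {n : ℕ} (ψ φ : (Fin n → ℝ) → ℂ) : ℂ :=
  ∫ x : Fin n → ℝ, ψ x * (starRingEnd ℂ) (φ x)

/-- The Heisenberg–Weyl operator:
`(T(z₀)ψ)(x) = e^{(i/ℏ)(p₀·x − p₀·x₀/2)} ψ(x − x₀)` for `z₀ = (x₀, p₀)`. -/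
def HW (ℏ : ℝ) {n : ℕ} (z₀ : Phase n) (ψ : (Fin n → ℝ) → ℂ) : (Fin n → ℝ) → ℂ :=
  fun x => Complex.exp (Complex.I / (ℏ : ℂ) *
      ((dotR z₀.2 x - dotR z₀.2 z₀.1 / 2 : ℝ) : ℂ)) * ψ (x - z₀.1)

/-- Convolution on phase space ℝ²ⁿ: `(a ∗ b)(z) = ∫ a(z′) b(z − z′) dz′`. -/
def convP {n : ℕ} (a b : Phase n → ℂ) (z : Phase n) : ℂ :=
  ∫ z' : Phase n, a z' * b (z - z')

/-- The standard symplectic form `σ((x,p),(x′,p′)) = p·x′ − p′·x` on ℝ²ⁿ. -/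
def symp {n : ℕ} (z w : Phase n) : ℝ := dotR z.2 w.1 - dotR w.2 z.1

/-- The standard (coherent-state) Gaussian `φ₀(x) = (πℏ)^{-n/4} e^{-|x|²/(2ℏ)}`. -/
def stdGauss (ℏ : ℝ) (n : ℕ) : (Fin n → ℝ) → ℂ :=
  fun x => (((π * ℏ) ^ ((n : ℝ) / 4))⁻¹ : ℝ) *
    Complex.exp (((-(∑ i, x i ^ 2) / (2 * ℏ) : ℝ)) : ℂ)

open scoped Matrix

theorem LinearMap.BilinForm.det_sq_eq_one_of_comp_eq {K V : Type*} [Field K] [AddCommGroup V]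
    [Module K V] [FiniteDimensional K V] {B : LinearMap.BilinForm K V} (hB : B.Nondegenerate)
    {f : V →ₗ[K] V} (hf : B.comp f f = B) : LinearMap.det f ^ 2 = 1 := by
  let b := Module.finBasis K V
  have hGram : (LinearMap.toMatrix b b f)ᵀ * BilinForm.toMatrix b B * LinearMap.toMatrix b b f =
      BilinForm.toMatrix b B := by
    rw [← LinearMap.BilinForm.toMatrix_comp, hf]
  have hdet := congrArg Matrix.det hGram
  rw [Matrix.det_mul, Matrix.det_mul, Matrix.det_transpose, LinearMap.det_toMatrix] at hdet
  have hB₀ : (BilinForm.toMatrix b B).det ≠ 0 :=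
    (LinearMap.BilinForm.nondegenerate_iff_det_ne_zero b).mp hB
  have : (LinearMap.det f ^ 2 - 1) * (BilinForm.toMatrix b B).det = 0 := by
    linear_combination hdet
  exact sub_eq_zero.mp ((mul_eq_zero.mp this).resolve_right hB₀)

theorem LinearEquiv.measurePreserving_of_abs_det_eq_one {E : Type*} [NormedAddCommGroup E]
    [NormedSpace ℝ E] [MeasurableSpace E] [BorelSpace E] [FiniteDimensional ℝ E]
    (μ : Measure E) [μ.IsAddHaarMeasure] (f : E ≃ₗ[ℝ] E)
    (hf : |LinearMap.det (f : E →ₗ[ℝ] E)| = 1) : MeasurePreserving f μ μ := by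
  have hdet : LinearMap.det (f : E →ₗ[ℝ] E) ≠ 0 := by
    intro h; simp [h] at hf
  refine ⟨(f : E →ₗ[ℝ] E).continuous_of_finiteDimensional.measurable, ?_⟩
  rw [← LinearEquiv.coe_coe, Measure.map_linearMap_addHaar_eq_smul_addHaar μ hdet, abs_inv, hf,
    inv_one, ENNReal.ofReal_one, one_smul]

theorem dotR_eq_dotProduct {n : ℕ} (p y : Fin n → ℝ) : dotR p y = p ⬝ᵥ y := rfl

def sympForm (n : ℕ) : LinearMap.BilinForm ℝ (Phase n) :=
  LinearMap.mk₂ ℝ symp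
    (fun z z' w => by simp only [symp, dotR_eq_dotProduct, Prod.fst_add, Prod.snd_add,
      add_dotProduct, dotProduct_add]; ring)
    (fun c z w => by simp only [symp, dotR_eq_dotProduct, Prod.smul_fst, Prod.smul_snd,
      smul_dotProduct, dotProduct_smul, smul_eq_mul]; ring)
    (fun z w w' => by simp only [symp, dotR_eq_dotProduct, Prod.fst_add, Prod.snd_add,
      add_dotProduct, dotProduct_add]; ring)
    (fun c z w => by simp only [symp, dotR_eq_dotProduct, Prod.smul_fst, Prod.smul_snd,
      smul_dotProduct, dotProduct_smul, smul_eq_mul]; ring)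

theorem sympForm_nondegenerate (n : ℕ) : (sympForm n).Nondegenerate := by
  refine .ofSeparatingLeft fun z hz => ?_
  have hx : symp z (0, z.1) = 0 := hz (0, z.1)
  have hp : symp z (z.2, 0) = 0 := hz (z.2, 0)
  simp only [symp, dotR_eq_dotProduct, dotProduct_zero, zero_dotProduct, zero_sub, neg_eq_zero,
    sub_zero, dotProduct_self_eq_zero] at hx hp
  exact Prod.ext hx hp

theorem measurePreserving_of_preserves_symp {n : ℕ} (S : Phase n ≃ₗ[ℝ] Phase n)
    (hS : ∀ z w : Phase n, symp (S z) (S w) = symp z w) :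
    MeasurePreserving S (volume : Measure (Phase n)) volume := by
  have hdet := LinearMap.BilinForm.det_sq_eq_one_of_comp_eq (sympForm_nondegenerate n)
    (f := (S : Phase n →ₗ[ℝ] Phase n)) (LinearMap.ext₂ fun z w => hS z w)
  have : (volume : Measure (Phase n)).IsAddHaarMeasure := Measure.prod.instIsAddHaarMeasure _ _
  refine S.measurePreserving_of_abs_det_eq_one volume ?_
  rw [← sq_eq_sq₀ (abs_nonneg _) zero_le_one, sq_abs, hdet, one_pow]

theorem toeplitz_symplectic_covariance_general (ℏ : ℝ) (n : ℕ)
    (S : Phase n ≃ₗ[ℝ] Phase n) (hS : ∀ z w : Phase n, symp (S z) (S w) = symp z w)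
    (U Uinv : ((Fin n → ℝ) → ℂ) → ((Fin n → ℝ) → ℂ))
    (hUinv₂ : ∀ f, U (Uinv f) = f)
    (hUinner : ∀ f g, L2inner (U f) (U g) = L2inner f g)
    (hUT : ∀ (z : Phase n) (f : (Fin n → ℝ) → ℂ), U (HW ℏ z (Uinv f)) = HW ℏ (S z) f)
    (a : Phase n → ℂ)
    (φ ψ χ : (Fin n → ℝ) → ℂ) :
    ∫ z : Phase n, a (S.symm z) * L2inner ψ (HW ℏ z φ) * L2inner (HW ℏ z φ) χ =
      ∫ z : Phase n,
        a z * L2inner (Uinv ψ) (HW ℏ z (Uinv φ)) * L2inner (HW ℏ z (Uinv φ)) (Uinv χ) := by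
  have inner_left (z : Phase n) :
      L2inner (Uinv ψ) (HW ℏ z (Uinv φ)) = L2inner ψ (HW ℏ (S z) φ) := by
    rw [← hUinner, hUinv₂, hUT]
  have inner_right (z : Phase n) :
      L2inner (HW ℏ z (Uinv φ)) (Uinv χ) = L2inner (HW ℏ (S z) φ) χ := by
    rw [← hUinner, hUinv₂, hUT]
  simp_rw [inner_left, inner_right]
  let e : Phase n ≃ᵐ Phase n := S.toContinuousLinearEquiv.toHomeomorph.toMeasurableEquiv
  rw [← MeasurePreserving.integral_comp' (f := e) (measurePreserving_of_preserves_symp S hS)]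
  simp [e]

/-- Symplectic covariance of Toeplitz operators, in weak form: if the unitary `U` on `L²(ℝⁿ)`
satisfies `U T(z) U⁻¹ = T(Sz)` for a linear symplectic bijection `S`, then
`Op_φ(a ∘ S⁻¹) = U Op_{U⁻¹φ}(a) U⁻¹`. -/
theorem toeplitz_symplectic_covariance (ℏ : ℝ) (hℏ : 0 < ℏ) (n : ℕ) (hn : 1 ≤ n)
    (S : Phase n ≃ₗ[ℝ] Phase n) (hS : ∀ z w : Phase n, symp (S z) (S w) = symp z w)
    (U Uinv : ((Fin n → ℝ) → ℂ) → ((Fin n → ℝ) → ℂ))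
    (hUlin : ∀ (c : ℂ) (f g : (Fin n → ℝ) → ℂ),
      U (fun x => c * f x + g x) = fun x => c * U f x + U g x)
    (hUinv₁ : ∀ f, Uinv (U f) = f) (hUinv₂ : ∀ f, U (Uinv f) = f)
    (hUmem : ∀ f, MeasureTheory.MemLp f 2 (volume : Measure (Fin n → ℝ)) →
      MeasureTheory.MemLp (U f) 2 (volume : Measure (Fin n → ℝ)))
    (hUinner : ∀ f g, L2inner (U f) (U g) = L2inner f g)
    (hUT : ∀ (z : Phase n) (f : (Fin n → ℝ) → ℂ), U (HW ℏ z (Uinv f)) = HW ℏ (S z) f)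
    (a : Phase n → ℂ) (ha : MeasureTheory.Integrable a (volume : Measure (Phase n)))
    (φ ψ χ : (Fin n → ℝ) → ℂ)
    (hφ : MeasureTheory.MemLp φ 2 (volume : Measure (Fin n → ℝ)))
    (hψ : MeasureTheory.MemLp ψ 2 (volume : Measure (Fin n → ℝ)))
    (hχ : MeasureTheory.MemLp χ 2 (volume : Measure (Fin n → ℝ))) :
    ∫ z : Phase n, a (S.symm z) * L2inner ψ (HW ℏ z φ) * L2inner (HW ℏ z φ) χ =
      ∫ z : Phase n,
        a z * L2inner (Uinv ψ) (HW ℏ z (Uinv φ)) * L2inner (HW ℏ z (Uinv φ)) (Uinv χ) :=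
  toeplitz_symplectic_covariance_general ℏ n S hS U Uinv hUinv₂ hUinner hUT a φ ψ χ
end
end

section
/- Let μ ∈ L¹(ℝ²ⁿ) with μ ≥ 0 almost everywhere and ∫_{ℝ²ⁿ} μ(z) dz = 1, and let φ ∈ L²(ℝⁿ) with ‖φ‖_{L²} = 1. Define ρ̂ : L²(ℝⁿ) → L²(ℝⁿ) by the Bochner integral ρ̂ψ = ∫_{ℝ²ⁿ} μ(z) (ψ|T(z)φ) T(z)φ dz (the integrand is Bochner integrable since ‖μ(z)(ψ|T(z)φ)T(z)φ‖ ≤ μ(z)‖ψ‖). Then: (i) ρ̂ is a bounded linear operator; (ii) for every ψ ∈ L²(ℝⁿ), (ρ̂ψ|ψ) = ∫ μ(z) |(ψ|T(z)φ)|² dz, which is real and ≥ 0, so ρ̂ is positive semidefinite and self-adjoint; (iii) for every Hilbert (orthonormal) basis (eᵢ) of L²(ℝⁿ), the family i ↦ (ρ̂eᵢ|eᵢ) is summable with sum 1, i.e. ρ̂ has trace 1. -/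
open MeasureTheory Complex Real Filter

noncomputable section

/-! ρ̂ is the Bochner integral `∫ μ(z) |T(z)φ⟩⟨T(z)φ| dz` in the Banach space of bounded operators;
it converges absolutely because each rank-one projection `|T(z)φ⟩⟨T(z)φ|` has norm one, so
boundedness comes for free, and pairing with vectors commutes with the integral, which gives the
quadratic-form formula and self-adjointness. The trace follows from Parseval's identity
`∑ᵢ |(T(z)φ|eᵢ)|² = 1` for each `z` and dominated convergence. Measurability of `z ↦ T(z)φ` is
Pettis' theorem in the separable space `L²(ℝⁿ)`: weak measurability suffices, and the inner
products `(ψ|T(z)φ)` are integrals of a jointly measurable kernel. -/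

open InnerProductSpace TopologicalSpace
open scoped ENNReal

section

variable {𝕜 E : Type*} [RCLike 𝕜] [NormedAddCommGroup E] [InnerProductSpace 𝕜 E]

theorem Orthonormal.countable [SeparableSpace E] {ι : Type*} {v : ι → E}
    (hv : Orthonormal 𝕜 v) : Countable ι := by
  refine Pairwise.countable_of_isOpen_disjoint (s := fun i => Metric.ball (v i) (1 / 2))
    (fun i j hij => Metric.ball_disjoint_ball ?_) (fun _ => Metric.isOpen_ball)
    (fun _ => Metric.nonempty_ball.2 (by norm_num))
  have hsq : dist (v i) (v j) ^ 2 = 2 := by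
    rw [dist_eq_norm, @norm_sub_sq 𝕜, hv.1 i, hv.1 j, hv.2 hij]
    norm_num
  nlinarith [dist_nonneg (x := v i) (y := v j)]

theorem aestronglyMeasurable_of_forall_inner [CompleteSpace E] [SeparableSpace E]
    {α : Type*} [MeasurableSpace α] {ν : Measure α} {f : α → E}
    (hf : ∀ c : E, AEStronglyMeasurable (fun a => inner 𝕜 c (f a)) ν) :
    AEStronglyMeasurable f ν := by
  obtain ⟨w, b, -⟩ := exists_hilbertBasis 𝕜 E
  have : Countable w := b.orthonormal.countable
  refine aestronglyMeasurable_of_tendsto_ae atTop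
    (f := fun s a => ∑ i ∈ s, (b.repr (f a) i) • b i) (fun s => ?_)
    (Eventually.of_forall fun a => (b.hasSum_repr (f a)))
  simp only [HilbertBasis.repr_apply_apply]
  exact Finset.aestronglyMeasurable_fun_sum _ fun i _ => (hf (b i)).smul_const _

theorem InnerProductSpace.continuous_rankOne {F : Type*} [NormedAddCommGroup F]
    [InnerProductSpace 𝕜 F] : Continuous fun p : E × F => rankOne 𝕜 p.1 p.2 :=
  -- `rankOne 𝕜 x y` is `smulRightL 𝕜 F E (innerSL 𝕜 y) x`, linear in `x`
  (((ContinuousLinearMap.smulRightL 𝕜 F E).comp (innerSL 𝕜)).continuous.comp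
    continuous_snd).clm_apply continuous_fst

end

section Toeplitz

variable {α E : Type*} [MeasurableSpace α] {ν : Measure α}
  [NormedAddCommGroup E] [InnerProductSpace ℂ E]

variable (ν) in
def toeplitzOperator (w : α → ℝ) (v : α → E) : E →L[ℂ] E :=
  ∫ z, (w z : ℂ) • rankOne ℂ (v z) (v z) ∂ν

variable {w : α → ℝ} {v : α → E}

theorem integrable_smul_rankOne (hw : Integrable w ν) (hv : AEStronglyMeasurable v ν)
    (hv1 : ∀ z, ‖v z‖ ≤ 1) : Integrable (fun z => (w z : ℂ) • rankOne ℂ (v z) (v z)) ν := by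
  have hrank := (continuous_rankOne (𝕜 := ℂ)).comp_aestronglyMeasurable (hv.prodMk hv)
  refine hw.norm.mono' ((continuous_ofReal.comp_aestronglyMeasurable hw.1).smul hrank)
    (Eventually.of_forall fun z => ?_)
  rw [norm_smul, norm_rankOne, norm_real]
  exact mul_le_of_le_one_right (norm_nonneg _) (mul_le_one₀ (hv1 z) (norm_nonneg _) (hv1 z))

theorem toeplitzOperator_apply
    (hint : Integrable (fun z => (w z : ℂ) • rankOne ℂ (v z) (v z)) ν) (ψ : E) :
    toeplitzOperator ν w v ψ = ∫ z, ((w z : ℂ) * inner ℂ (v z) ψ) • v z ∂ν := by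
  simp only [toeplitzOperator, ContinuousLinearMap.integral_apply hint,
    smul_apply, rankOne_apply, smul_smul]

theorem inner_toeplitzOperator_apply [CompleteSpace E]
    (hint : Integrable (fun z => (w z : ℂ) • rankOne ℂ (v z) (v z)) ν) (χ ψ : E) :
    inner ℂ χ (toeplitzOperator ν w v ψ) =
      ∫ z, (w z : ℂ) * (inner ℂ (v z) ψ * inner ℂ χ (v z)) ∂ν := by
  rw [toeplitzOperator, ContinuousLinearMap.integral_apply hint,
    ← integral_inner (hint.apply_continuousLinearMap ψ)]
  simp only [smul_apply, rankOne_apply, smul_smul, inner_smul_right, mul_assoc]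

theorem inner_self_toeplitzOperator_apply [CompleteSpace E]
    (hint : Integrable (fun z => (w z : ℂ) • rankOne ℂ (v z) (v z)) ν) (ψ : E) :
    inner ℂ ψ (toeplitzOperator ν w v ψ) = ↑(∫ z, w z * ‖inner ℂ (v z) ψ‖ ^ 2 ∂ν) := by
  rw [inner_toeplitzOperator_apply hint, ← integral_complex_ofReal]
  congr 1 with z
  rw [← inner_conj_symm ψ (v z), mul_conj, normSq_eq_norm_sq]
  push_cast
  ring

theorem isSelfAdjoint_toeplitzOperator [CompleteSpace E]
    (hint : Integrable (fun z => (w z : ℂ) • rankOne ℂ (v z) (v z)) ν) :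
    IsSelfAdjoint (toeplitzOperator ν w v) := by
  refine ContinuousLinearMap.isSelfAdjoint_iff_isSymmetric.2 fun ψ χ => ?_
  simp only [ContinuousLinearMap.coe_coe]
  rw [← inner_conj_symm, inner_toeplitzOperator_apply hint, ← integral_conj,
    inner_toeplitzOperator_apply hint]
  congr 1 with z
  simp only [map_mul, conj_ofReal, inner_conj_symm]
  ring

theorem HilbertBasis.hasSum_inner_toeplitzOperator [CompleteSpace E] [SeparableSpace E]
    {ι : Type*} (e : HilbertBasis ι ℂ E) (hw : Integrable w ν) (hv : AEStronglyMeasurable v ν)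
    (hv1 : ∀ z, ‖v z‖ = 1) :
    HasSum (fun i => inner ℂ (e i) (toeplitzOperator ν w v (e i))) ↑(∫ z, w z ∂ν) := by
  have : Countable ι := e.orthonormal.countable
  have hint := integrable_smul_rankOne hw hv fun z => (hv1 z).le
  have hparseval : ∀ z, HasSum (fun i => inner ℂ (v z) (e i) * inner ℂ (e i) (v z)) 1 := by
    intro z
    simpa [inner_self_eq_norm_sq_to_K, hv1 z] using e.hasSum_inner_mul_inner (v z) (v z)
  simp_rw [inner_toeplitzOperator_apply hint, ← integral_complex_ofReal]
  refine hasSum_integral_of_dominated_convergence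
    (fun i z => |w z| * re (inner ℂ (v z) (e i) * inner ℂ (e i) (v z))) (fun i => ?_)
    (fun i => Eventually.of_forall fun z => ?_) (Eventually.of_forall fun z => ?_) ?_
    (Eventually.of_forall fun z => by simpa using (hparseval z).mul_left (w z : ℂ))
  · exact (continuous_ofReal.comp_aestronglyMeasurable hw.1).mul
      (hv.inner_const.mul hv.const_inner)
  · rw [norm_mul, norm_real, Real.norm_eq_abs]
    exact (congrArg _ (inner_mul_symm_re_eq_norm (𝕜 := ℂ) _ _)).ge
  · exact ((hasSum_re (hparseval z)).mul_left |w z|).summable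
  · refine hw.abs.congr (Eventually.of_forall fun z => ?_)
    simpa using ((hasSum_re (hparseval z)).mul_left |w z|).tsum_eq.symm

end Toeplitz

-- makes `L²(ℝⁿ)` separable, through `Lp.SecondCountableTopology`
instance fact_two_ne_top : Fact ((2 : ℝ≥0∞) ≠ ∞) := ⟨ENNReal.ofNat_ne_top⟩

theorem stronglyMeasurable_HW_uncurry (ℏ : ℝ) {n : ℕ} {f : (Fin n → ℝ) → ℂ}
    (hf : StronglyMeasurable f) :
    StronglyMeasurable fun p : Phase n × (Fin n → ℝ) => HW ℏ p.1 f p.2 := by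
  have hphase : Continuous fun p : Phase n × (Fin n → ℝ) =>
      Complex.exp (I / ℏ * ((dotR p.1.2 p.2 - dotR p.1.2 p.1.1 / 2 : ℝ) : ℂ)) := by
    unfold dotR
    fun_prop
  exact hphase.stronglyMeasurable.mul (hf.comp_measurable (measurable_snd.sub measurable_fst.fst))

theorem aestronglyMeasurable_of_ae_eq_HW {ℏ : ℝ} {n : ℕ} {ν : Measure (Phase n)}
    {F : Phase n → Lp ℂ 2 (volume : Measure (Fin n → ℝ))}
    {f : Lp ℂ 2 (volume : Measure (Fin n → ℝ))}
    (hF : ∀ z, (F z : (Fin n → ℝ) → ℂ) =ᵐ[volume] HW ℏ z f) : AEStronglyMeasurable F ν := by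
  refine aestronglyMeasurable_of_forall_inner (𝕜 := ℂ) fun c => ?_
  have hkernel : StronglyMeasurable fun p : Phase n × (Fin n → ℝ) =>
      inner ℂ (c p.2) (HW ℏ p.1 f p.2) :=
    ((Lp.stronglyMeasurable c).comp_measurable measurable_snd).inner
      (stronglyMeasurable_HW_uncurry ℏ (Lp.stronglyMeasurable f))
  have hinner : (fun z => inner ℂ c (F z)) = fun z => ∫ x, inner ℂ (c x) (HW ℏ z f x) :=
    funext fun z => by
      rw [L2.inner_def]
      exact integral_congr_ae ((hF z).mono fun x hx => congrArg (inner ℂ (c x)) hx)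
  exact hinner ▸ hkernel.integral_prod_right'.aestronglyMeasurable

theorem toeplitz_density_operator_general (ℏ : ℝ) (n : ℕ)
    (T : Phase n →
      (Lp ℂ 2 (volume : Measure (Fin n → ℝ)) ≃ₗᵢ[ℂ] Lp ℂ 2 (volume : Measure (Fin n → ℝ))))
    (hT : ∀ (z : Phase n) (f : Lp ℂ 2 (volume : Measure (Fin n → ℝ))),
      (T z f : (Fin n → ℝ) → ℂ) =ᵐ[(volume : Measure (Fin n → ℝ))] HW ℏ z (⇑f))
    (μ : Phase n → ℝ) (hμint : MeasureTheory.Integrable μ (volume : Measure (Phase n)))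
    (hμpos : ∀ᵐ z ∂(volume : Measure (Phase n)), 0 ≤ μ z)
    (hμ1 : ∫ z : Phase n, μ z = 1)
    (φ : Lp ℂ 2 (volume : Measure (Fin n → ℝ))) (hφ : ‖φ‖ = 1) :
    ∃ R : Lp ℂ 2 (volume : Measure (Fin n → ℝ)) →L[ℂ]
        Lp ℂ 2 (volume : Measure (Fin n → ℝ)),
      -- (i) ρ̂ is given by the Bochner integral
      (∀ ψ, R ψ = ∫ z : Phase n, ((μ z : ℂ) * (inner ℂ ((T z) φ) ψ : ℂ)) • ((T z) φ)) ∧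
      -- (ii) positivity: (ρ̂ψ|ψ) = ∫ μ(z)|(ψ|T(z)φ)|² dz ≥ 0 ...
      (∀ ψ, (inner ℂ ψ (R ψ) : ℂ) = ((∫ z : Phase n, μ z * ‖(inner ℂ ((T z) φ) ψ : ℂ)‖ ^ 2 : ℝ) : ℂ)) ∧
      (∀ ψ, (0 : ℝ) ≤ ∫ z : Phase n, μ z * ‖(inner ℂ ((T z) φ) ψ : ℂ)‖ ^ 2) ∧
      -- ... and self-adjointness
      (∀ ψ χ, (inner ℂ (R ψ) χ : ℂ) = (inner ℂ ψ (R χ) : ℂ)) ∧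
      -- (iii) trace one: for every Hilbert basis, Σᵢ (ρ̂eᵢ|eᵢ) = 1
      (∀ (ι : Type) (e : HilbertBasis ι ℂ (Lp ℂ 2 (volume : Measure (Fin n → ℝ)))),
        HasSum (fun i => (inner ℂ (e i) (R (e i)) : ℂ)) 1) := by
  have hTφ : ∀ z, ‖T z φ‖ = 1 := fun z => ((T z).norm_map φ).trans hφ
  have hmeas : AEStronglyMeasurable (fun z => T z φ) volume :=
    aestronglyMeasurable_of_ae_eq_HW fun z => hT z φ
  have hint := integrable_smul_rankOne hμint hmeas fun z => (hTφ z).le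
  refine ⟨toeplitzOperator volume μ fun z => T z φ, toeplitzOperator_apply hint,
    inner_self_toeplitzOperator_apply hint, fun ψ => integral_nonneg_of_ae ?_,
    (isSelfAdjoint_toeplitzOperator hint).isSymmetric, fun ι e => ?_⟩
  · filter_upwards [hμpos] with z hz using by positivity
  · simpa [hμ1] using e.hasSum_inner_toeplitzOperator hμint hmeas hTφ

/-- For a probability density `μ` on phase space and a normalized window `φ ∈ L²(ℝⁿ)`,
the operator `ρ̂ψ = ∫ μ(z)(ψ|T(z)φ) T(z)φ dz` is a bounded, positive semidefinite,
self-adjoint operator of trace one, i.e. a density operator. Here `T` is the family of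
Heisenberg–Weyl operators, realized as unitaries of `L²(ℝⁿ)`. -/
theorem toeplitz_density_operator (ℏ : ℝ) (hℏ : 0 < ℏ) (n : ℕ) (hn : 1 ≤ n)
    (T : Phase n →
      (Lp ℂ 2 (volume : Measure (Fin n → ℝ)) ≃ₗᵢ[ℂ] Lp ℂ 2 (volume : Measure (Fin n → ℝ))))
    (hT : ∀ (z : Phase n) (f : Lp ℂ 2 (volume : Measure (Fin n → ℝ))),
      (T z f : (Fin n → ℝ) → ℂ) =ᵐ[(volume : Measure (Fin n → ℝ))] HW ℏ z (⇑f))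
    (μ : Phase n → ℝ) (hμint : MeasureTheory.Integrable μ (volume : Measure (Phase n)))
    (hμpos : ∀ᵐ z ∂(volume : Measure (Phase n)), 0 ≤ μ z)
    (hμ1 : ∫ z : Phase n, μ z = 1)
    (φ : Lp ℂ 2 (volume : Measure (Fin n → ℝ))) (hφ : ‖φ‖ = 1) :
    ∃ R : Lp ℂ 2 (volume : Measure (Fin n → ℝ)) →L[ℂ]
        Lp ℂ 2 (volume : Measure (Fin n → ℝ)),
      -- (i) ρ̂ is given by the Bochner integral
      (∀ ψ, R ψ = ∫ z : Phase n, ((μ z : ℂ) * (inner ℂ ((T z) φ) ψ : ℂ)) • ((T z) φ)) ∧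
      -- (ii) positivity: (ρ̂ψ|ψ) = ∫ μ(z)|(ψ|T(z)φ)|² dz ≥ 0 ...
      (∀ ψ, (inner ℂ ψ (R ψ) : ℂ) = ((∫ z : Phase n, μ z * ‖(inner ℂ ((T z) φ) ψ : ℂ)‖ ^ 2 : ℝ) : ℂ)) ∧
      (∀ ψ, (0 : ℝ) ≤ ∫ z : Phase n, μ z * ‖(inner ℂ ((T z) φ) ψ : ℂ)‖ ^ 2) ∧
      -- ... and self-adjointness
      (∀ ψ χ, (inner ℂ (R ψ) χ : ℂ) = (inner ℂ ψ (R χ) : ℂ)) ∧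
      -- (iii) trace one: for every Hilbert basis, Σᵢ (ρ̂eᵢ|eᵢ) = 1
      (∀ (ι : Type) (e : HilbertBasis ι ℂ (Lp ℂ 2 (volume : Measure (Fin n → ℝ)))),
        HasSum (fun i => (inner ℂ (e i) (R (e i)) : ℂ)) 1) :=
  toeplitz_density_operator_general ℏ n T hT μ hμint hμpos hμ1 φ hφ
end
end
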